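/- arXiv:2410.17403 — 2 statements merged into one kernel-verified Lean document; each statement's English description precedes it below -/
import Mathlib

section
/- In the reachability layering of a digraph, for every even j ≥ 0, every vertex of G* reachable (by a directed path) from a vertex of L_j lies in ∪_{j'≤j} L_{j'}; and for every odd j ≥ 1, every vertex of G* that can reach (by a directed path) a vertex of L_j lies in ∪_{j'≤j} L_{j'}. (Here vertices not lying in any layer ∪_{j'} L_{j'} are excluded, e.g., all vertices lie in some layer when G* is weakly connected.) -/
/-!
Layers `L_j` with `j` even are closed under forward reachability, and layers with `j` odd under
backward reachability, among the vertices not in an earlier layer: a path from `L_j` (even `j`)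
extends the path from `L_{j-1}` (from `v0` if `j = 0`) that put its start into `L_j`. So a
vertex reachable from `L_j` that avoided `L_0, …, L_{j-1}` would itself be in `L_j`.
-/

/-- Reachability via directed paths using the edges of `E`. -/
def Reach {V : Type*} (E : Set (V × V)) (u w : V) : Prop :=
  Relation.ReflTransGen (fun a b => (a, b) ∈ E) u w

/-- The reachability layering of the digraph with edge set `E`, started at `v0`:
`L₀` is the set of vertices reachable from `v0`; for odd `j ≥ 1`, `L_j` is the set
of yet-unlayered vertices that can reach `L_{j-1}`; for even `j ≥ 2`, `L_j` is the
set of yet-unlayered vertices reachable from `L_{j-1}`. -/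
def layer {V : Type*} (E : Set (V × V)) (v0 : V) : ℕ → Set V
  | 0 => {v | Reach E v0 v}
  | (j + 1) =>
      {v | (∀ j' ≤ j, v ∉ layer E v0 j') ∧
        (if Odd (j + 1) then
          ∃ w ∈ layer E v0 j, Reach E v w
        else
          ∃ w ∈ layer E v0 j, Reach E w v)}

section Layer

variable {V : Type*} {E : Set (V × V)} {v0 u v w : V} {j : ℕ}

theorem Reach.trans (huv : Reach E u v) (hvw : Reach E v w) : Reach E u w :=
  Relation.ReflTransGen.trans huv hvw

theorem mem_layer_zero : v ∈ layer E v0 0 ↔ Reach E v0 v := by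
  simp only [layer, Set.mem_ofPred_eq]

theorem mem_layer_succ_of_odd (hj : Odd (j + 1)) :
    v ∈ layer E v0 (j + 1) ↔
      (∀ j' ≤ j, v ∉ layer E v0 j') ∧ ∃ w ∈ layer E v0 j, Reach E v w := by
  simp only [layer, Set.mem_ofPred_eq, if_pos hj]

theorem mem_layer_succ_of_even (hj : Even (j + 1)) :
    v ∈ layer E v0 (j + 1) ↔
      (∀ j' ≤ j, v ∉ layer E v0 j') ∧ ∃ w ∈ layer E v0 j, Reach E w v := by
  simp only [layer, Set.mem_ofPred_eq, if_neg (Nat.not_odd_iff_even.mpr hj)]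

theorem mem_layer_of_reach_of_even (hj : Even j) (hw : w ∈ layer E v0 j) (hwv : Reach E w v)
    (hv : ∀ j' < j, v ∉ layer E v0 j') : v ∈ layer E v0 j := by
  cases j with
  | zero => exact mem_layer_zero.mpr ((mem_layer_zero.mp hw).trans hwv)
  | succ k =>
    rw [mem_layer_succ_of_even hj] at hw ⊢
    obtain ⟨-, u, hu, huw⟩ := hw
    exact ⟨fun j' hj' => hv j' (Nat.lt_succ_of_le hj'), u, hu, huw.trans hwv⟩

theorem mem_layer_of_reach_of_odd (hj : Odd j) (hv : v ∈ layer E v0 j) (hwv : Reach E w v)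
    (hw : ∀ j' < j, w ∉ layer E v0 j') : w ∈ layer E v0 j := by
  cases j with
  | zero => exact absurd hj Nat.not_odd_zero
  | succ k =>
    rw [mem_layer_succ_of_odd hj] at hv ⊢
    obtain ⟨-, u, hu, hvu⟩ := hv
    exact ⟨fun j' hj' => hw j' (Nat.lt_succ_of_le hj'), u, hu, hwv.trans hvu⟩

end Layer

theorem stmt_2 {V : Type*} (E : Set (V × V)) (v0 : V) (j : ℕ) :
    (Even j → ∀ w v : V, w ∈ layer E v0 j → Reach E w v →
      (∃ m, v ∈ layer E v0 m) → ∃ j' ≤ j, v ∈ layer E v0 j') ∧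
    (Odd j → ∀ w v : V, v ∈ layer E v0 j → Reach E w v →
      (∃ m, w ∈ layer E v0 m) → ∃ j' ≤ j, w ∈ layer E v0 j') := by
  refine ⟨fun hj w v hw hwv _ => ?_, fun hj w v hv hwv _ => ?_⟩
  · by_contra! hv
    exact hv j le_rfl (mem_layer_of_reach_of_even hj hw hwv fun j' hj' => hv j' hj'.le)
  · by_contra! hw
    exact hw j le_rfl (mem_layer_of_reach_of_odd hj hv hwv fun j' hj' => hw j' hj'.le)
end

section
/- Consider the one-path junction tree construction: a digraph with edge set E* containing a directed path P with vertices v_0,…,v_{|P|}; for each i ∈ [k], a_i is the earliest vertex of P reachable from s_i, b_i is the latest vertex of P that can reach t_i, P_{s_i} ⊆ E* is a fixed directed s_i–a_i path and P_{t_i} ⊆ E* a fixed directed b_i–t_i path; intervals I_i = P[a_i, b_i] are grouped dyadically by length into groups D_0^v (zero-length intervals at v) and D_j^{v_ℓ} for j ≥ 1 and ℓ a multiple of 2^{j−1}; each nonempty group yields the junction tree H consisting of the subpath of P spanning the union of its intervals together with ∪_i (P_{s_i} ∪ P_{t_i}) over pairs i in the group, and ℋ denotes the collection of these junction trees. Then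 every vertex of V(E*) \ V(P) appears in at most 2(5·log₂|P| + 6) = 10·log₂|P| + 12 junction trees of ℋ, and the same bound holds for every edge of E* not on P. -/
/-- The edge set of the walk whose vertex list is `l`. -/
def listEdges {V : Type*} (l : List V) : Set (V × V) :=
  {e | e ∈ l.zip l.tail}

/-- `l` is (the vertex list of) a directed path from `u` to `w` using edges of `E`. -/
def IsDipath {V : Type*} (E : Set (V × V)) (l : List V) (u w : V) : Prop :=
  l ≠ [] ∧ l.Chain' (fun a b => (a, b) ∈ E) ∧
    l.head? = some u ∧ l.getLast? = some w

open Set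

namespace IsDipath

variable {V : Type*} {E : Set (V × V)} {l : List V} {u w x : V}

theorem reach_of_mem (hd : IsDipath E l u w) (hx : x ∈ l) : Reach E u x := by
  obtain ⟨hne, hchain, hhead, -⟩ := hd
  have hu : l.head hne = u := Option.some.inj ((List.head?_eq_some_head hne).symm.trans hhead)
  exact hchain.induction (Reach E u ·) l (fun _ _ hxy hux => hux.tail hxy)
    (fun _ => hu ▸ Relation.ReflTransGen.refl) x hx

theorem reach_to_of_mem (hd : IsDipath E l u w) (hx : x ∈ l) : Reach E x w := by
  obtain ⟨hne, hchain, -, hlast⟩ := hd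
  have hw : l.getLast hne = w :=
    Option.some.inj ((List.getLast?_eq_some_getLast hne).symm.trans hlast)
  exact hchain.backwards_induction (Reach E · w) l (fun _ _ hxy hyw => hyw.head hxy)
    (fun _ => hw ▸ Relation.ReflTransGen.refl) x hx

end IsDipath

theorem snd_mem_of_mem_listEdges {V : Type*} {l : List V} {e : V × V}
    (he : e ∈ listEdges l) : e.2 ∈ l :=
  List.mem_of_mem_tail (List.of_mem_zip (show e ∈ l.zip l.tail from he)).2

section Attachment

variable {V ι : Type*} {E : Set (V × V)} {n : ℕ} {p : ℕ → V} {A B : ι → ℕ}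

theorem subsingleton_image_entry {s : ι → V} {P : ι → List V} (hAn : ∀ i, A i ≤ n)
    (hAmin : ∀ i, ∀ l ≤ n, Reach E (s i) (p l) → A i ≤ l)
    (hP : ∀ i, IsDipath E (P i) (s i) (p (A i))) (x : V) :
    (A '' {i | x ∈ P i}).Subsingleton := by
  have hle : ∀ i i', x ∈ P i → x ∈ P i' → A i ≤ A i' := fun i i' hi hi' =>
    hAmin i _ (hAn i') (((hP i).reach_of_mem hi).trans ((hP i').reach_to_of_mem hi'))
  rintro _ ⟨i, hi, rfl⟩ _ ⟨i', hi', rfl⟩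
  exact le_antisymm (hle i i' hi hi') (hle i' i hi' hi)

theorem subsingleton_image_exit {t : ι → V} {P : ι → List V} (hBn : ∀ i, B i ≤ n)
    (hBmax : ∀ i, ∀ l ≤ n, Reach E (p l) (t i) → l ≤ B i)
    (hP : ∀ i, IsDipath E (P i) (p (B i)) (t i)) (x : V) :
    (B '' {i | x ∈ P i}).Subsingleton := by
  have hle : ∀ i i', x ∈ P i → x ∈ P i' → B i ≤ B i' := fun i i' hi hi' =>
    hBmax i' _ (hBn i) (((hP i).reach_of_mem hi).trans ((hP i').reach_to_of_mem hi'))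
  rintro _ ⟨i, hi, rfl⟩ _ ⟨i', hi', rfl⟩
  exact le_antisymm (hle i i' hi hi') (hle i' i hi' hi)

end Attachment

/-- The two halves of the window each contain at most one multiple of `m`. -/
theorem encard_le_two_of_forall_dvd_of_subset_Ico {m c : ℕ} {S : Set ℕ}
    (hdvd : ∀ ℓ ∈ S, m ∣ ℓ) (hS : S ⊆ Ico c (c + 2 * m)) : S.encard ≤ 2 := by
  have hgap : ∀ ℓ ∈ S, ∀ ℓ' ∈ S, ℓ < ℓ' → ℓ + m ≤ ℓ' := fun ℓ hℓ ℓ' hℓ' hlt => by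
    have := Nat.le_of_dvd (Nat.sub_pos_of_lt hlt) (Nat.dvd_sub (hdvd ℓ' hℓ') (hdvd ℓ hℓ))
    omega
  have hinj : InjOn (fun ℓ => decide (ℓ < c + m)) S := by
    intro ℓ hℓ ℓ' hℓ' heq
    obtain ⟨hcℓ, hℓlt⟩ := hS hℓ
    obtain ⟨hcℓ', hℓ'lt⟩ := hS hℓ'
    simp only [decide_eq_decide] at heq
    by_contra hne
    rcases Nat.lt_or_gt_of_ne hne with hlt | hlt
    · have := hgap ℓ hℓ ℓ' hℓ' hlt
      omega
    · have := hgap ℓ' hℓ' ℓ hℓ hlt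
      omega
  calc S.encard ≤ (univ : Set Bool).encard := encard_le_encard_of_injOn (mapsTo_univ _ _) hinj
    _ = 2 := by rw [encard_univ, ENat.card_eq_coe_fintype_card, Fintype.card_bool]; rfl

theorem encard_dvd_window_le_two (m : ℕ) {α : Set ℕ} (hα : α.Subsingleton) (c : ℕ → ℕ) :
    {ℓ | m ∣ ℓ ∧ ∃ a ∈ α, ℓ ∈ Ico (c a) (c a + 2 * m)}.encard ≤ 2 := by
  rcases hα.eq_empty_or_singleton with rfl | ⟨a, rfl⟩
  · simp
  · refine encard_le_two_of_forall_dvd_of_subset_Ico (c := c a) (fun ℓ hℓ => hℓ.1) ?_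
    rintro ℓ ⟨-, _, rfl, hℓ⟩
    exact hℓ

section DyadicGroups

variable {ι : Type*} [Fintype ι] (A B : ι → ℕ)

def pointGroup (v : ℕ) : Finset ι :=
  Finset.univ.filter (fun i => A i = B i ∧ A i = v)

def dyadicGroup (j ℓ : ℕ) : Finset ι :=
  Finset.univ.filter (fun i => 2 ^ (j - 1) ≤ B i - A i ∧ B i - A i < 2 ^ j ∧
    A i ≤ ℓ ∧ ℓ ≤ B i)

variable {A B} {I J : Set ι}

theorem encard_pointGroup_meeting_le (hI : (A '' I).Subsingleton) (hJ : (B '' J).Subsingleton) :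
    {v | ∃ i ∈ pointGroup A B v, i ∈ I ∨ i ∈ J}.encard ≤ 2 := by
  have hsub : {v | ∃ i ∈ pointGroup A B v, i ∈ I ∨ i ∈ J} ⊆ A '' I ∪ B '' J := by
    rintro v ⟨i, hi, hIJ | hIJ⟩ <;> simp only [pointGroup, Finset.mem_filter] at hi
    · exact Or.inl ⟨i, hIJ, hi.2.2⟩
    · exact Or.inr ⟨i, hIJ, hi.2.1 ▸ hi.2.2⟩
  calc _ ≤ (A '' I ∪ B '' J).encard := encard_le_encard hsub
    _ ≤ (A '' I).encard + (B '' J).encard := encard_union_le _ _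
    _ ≤ 1 + 1 := add_le_add (encard_le_one_iff_subsingleton.2 hI)
        (encard_le_one_iff_subsingleton.2 hJ)
    _ = 2 := by norm_num

theorem encard_dyadicGroup_meeting_le (hI : (A '' I).Subsingleton)
    (hJ : (B '' J).Subsingleton) {j : ℕ} (hj : 1 ≤ j) :
    {ℓ | 2 ^ (j - 1) ∣ ℓ ∧ ∃ i ∈ dyadicGroup A B j ℓ, i ∈ I ∨ i ∈ J}.encard ≤ 4 := by
  set m := 2 ^ (j - 1)
  have h2m : 2 ^ j = 2 * m := by rw [← pow_succ']; congr 1; omega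
  have hsub : {ℓ | m ∣ ℓ ∧ ∃ i ∈ dyadicGroup A B j ℓ, i ∈ I ∨ i ∈ J} ⊆
      {ℓ | m ∣ ℓ ∧ ∃ a ∈ A '' I, ℓ ∈ Ico a (a + 2 * m)} ∪
        {ℓ | m ∣ ℓ ∧ ∃ b ∈ B '' J, ℓ ∈ Ico (b + 1 - 2 * m) (b + 1 - 2 * m + 2 * m)} := by
    rintro ℓ ⟨hdvd, i, hi, hIJ | hIJ⟩ <;>
      simp only [dyadicGroup, Finset.mem_filter, h2m] at hi
    · exact Or.inl ⟨hdvd, A i, ⟨i, hIJ, rfl⟩, mem_Ico.2 ⟨hi.2.2.2.1, by omega⟩⟩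
    · exact Or.inr ⟨hdvd, B i, ⟨i, hIJ, rfl⟩, mem_Ico.2 ⟨by omega, by omega⟩⟩
  calc _ ≤ _ := encard_le_encard hsub
    _ ≤ _ := encard_union_le _ _
    _ ≤ 2 + 2 := add_le_add (encard_dvd_window_le_two m hI id)
        (encard_dvd_window_le_two m hJ fun b => b + 1 - 2 * m)
    _ = 4 := by norm_num

theorem card_groups_meeting_le (n : ℕ) (hI : (A '' I).Subsingleton)
    (hJ : (B '' J).Subsingleton) (inTree : Finset ι → Prop)
    (hinTree : ∀ g, inTree g → ∃ i ∈ g, i ∈ I ∨ i ∈ J) :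
    (({v | v ≤ n ∧ (pointGroup A B v).Nonempty ∧ inTree (pointGroup A B v)}.ncard : ℝ) +
      ∑ j ∈ Finset.Icc 1 (Nat.log 2 n + 1),
        ({ℓ | ℓ ≤ n ∧ 2 ^ (j - 1) ∣ ℓ ∧ (dyadicGroup A B j ℓ).Nonempty ∧
          inTree (dyadicGroup A B j ℓ)}.ncard : ℝ)) ≤
      10 * Real.logb 2 (n : ℝ) + 12 := by
  have hpoint : (({v | v ≤ n ∧ (pointGroup A B v).Nonempty ∧
      inTree (pointGroup A B v)}.ncard : ℕ) : ℝ) ≤ 2 := by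
    refine mod_cast ENat.toNat_le_of_le_natCast <|
      (encard_le_encard ?_).trans (encard_pointGroup_meeting_le hI hJ)
    exact fun v hv => hinTree _ hv.2.2
  have hdyadic : ∀ j ∈ Finset.Icc 1 (Nat.log 2 n + 1),
      (({ℓ | ℓ ≤ n ∧ 2 ^ (j - 1) ∣ ℓ ∧ (dyadicGroup A B j ℓ).Nonempty ∧
        inTree (dyadicGroup A B j ℓ)}.ncard : ℕ) : ℝ) ≤ 4 := fun j hj => by
    refine mod_cast ENat.toNat_le_of_le_natCast <|
      (encard_le_encard ?_).trans (encard_dyadicGroup_meeting_le hI hJ (Finset.mem_Icc.1 hj).1)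
    exact fun ℓ hℓ => ⟨hℓ.2.1, hinTree _ hℓ.2.2.2⟩
  have hsum := Finset.sum_le_card_nsmul _ _ _ hdyadic
  have hlog := Real.natLog_le_logb n 2
  simp only [Nat.card_Icc, nsmul_eq_mul] at hsum
  push_cast at hsum hlog
  have : (0 : ℝ) ≤ Nat.log 2 n := Nat.cast_nonneg _
  linarith

end DyadicGroups

theorem stmt_9_general {V : Type*} (Estar : Set (V × V)) (n : ℕ) (p : ℕ → V)
    (k : ℕ) (s t : Fin k → V) (A B : Fin k → ℕ)
    (hAn : ∀ i, A i ≤ n) (hBn : ∀ i, B i ≤ n)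
    -- `A i` is the earliest index on `P` reachable from `s i`
    (hAmin : ∀ i, ∀ l ≤ n, Reach Estar (s i) (p l) → A i ≤ l)
    -- `B i` is the latest index on `P` that can reach `t i`
    (hBmax : ∀ i, ∀ l ≤ n, Reach Estar (p l) (t i) → l ≤ B i)
    -- the fixed connecting dipaths, contained in `E*`
    (Ps Pt : Fin k → List V)
    (hPs : ∀ i, IsDipath Estar (Ps i) (s i) (p (A i)))
    (hPt : ∀ i, IsDipath Estar (Pt i) (p (B i)) (t i)) :
    -- the dyadic groups
    let grp : ℕ → ℕ → Finset (Fin k) := fun j ℓ =>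
      Finset.univ.filter (fun i => 2 ^ (j - 1) ≤ B i - A i ∧ B i - A i < 2 ^ j ∧
        A i ≤ ℓ ∧ ℓ ≤ B i)
    let grp0 : ℕ → Finset (Fin k) := fun v =>
      Finset.univ.filter (fun i => A i = B i ∧ A i = v)
    -- vertex set of the junction tree associated with a group `g`
    let vertH : Finset (Fin k) → Set V := fun g =>
      {x | ∃ l, (∃ i ∈ g, A i ≤ l) ∧ (∃ i ∈ g, l ≤ B i) ∧ x = p l} ∪
        {x | ∃ i ∈ g, x ∈ Ps i ∨ x ∈ Pt i}
    -- edge set of the junction tree associated with a group `g`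
    let edgeH : Finset (Fin k) → Set (V × V) := fun g =>
      {e | ∃ l, (∃ i ∈ g, A i ≤ l) ∧ (∃ i ∈ g, l + 1 ≤ B i) ∧ e = (p l, p (l + 1))} ∪
        {e | ∃ i ∈ g, e ∈ listEdges (Ps i) ∨ e ∈ listEdges (Pt i)}
    -- vertices of `V(E*) \ V(P)` lie in at most `10 log₂|P| + 12` junction trees
    (∀ u : V, (∃ e ∈ Estar, u = e.1 ∨ u = e.2) → (∀ l ≤ n, u ≠ p l) →
      (({v | v ≤ n ∧ (grp0 v).Nonempty ∧ u ∈ vertH (grp0 v)}.ncard : ℝ) +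
        ∑ j ∈ Finset.Icc 1 (Nat.log 2 n + 1),
          ({ℓ | ℓ ≤ n ∧ 2 ^ (j - 1) ∣ ℓ ∧ (grp j ℓ).Nonempty ∧
            u ∈ vertH (grp j ℓ)}.ncard : ℝ)) ≤
        10 * Real.logb 2 (n : ℝ) + 12) ∧
    -- edges of `E*` not on `P` lie in at most `10 log₂|P| + 12` junction trees
    (∀ e ∈ Estar, (∀ l, l < n → e ≠ (p l, p (l + 1))) →
      (({v | v ≤ n ∧ (grp0 v).Nonempty ∧ e ∈ edgeH (grp0 v)}.ncard : ℝ) +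
        ∑ j ∈ Finset.Icc 1 (Nat.log 2 n + 1),
          ({ℓ | ℓ ≤ n ∧ 2 ^ (j - 1) ∣ ℓ ∧ (grp j ℓ).Nonempty ∧
            e ∈ edgeH (grp j ℓ)}.ncard : ℝ)) ≤
        10 * Real.logb 2 (n : ℝ) + 12) := by
  intro grp grp0 vertH edgeH
  have hentry := subsingleton_image_entry hAn hAmin hPs
  have hexit := subsingleton_image_exit hBn hBmax hPt
  refine ⟨fun u _ hu => ?_, fun e _ he => ?_⟩
  · refine card_groups_meeting_le n (hentry u) (hexit u) (fun g => u ∈ vertH g) ?_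
    rintro g (⟨l, -, ⟨i, -, hl⟩, rfl⟩ | hPsPt)
    · exact absurd rfl (hu l (hl.trans (hBn i)))
    · exact hPsPt
  · refine card_groups_meeting_le n
      ((hentry e.2).anti (image_mono fun _ => snd_mem_of_mem_listEdges))
      ((hexit e.2).anti (image_mono fun _ => snd_mem_of_mem_listEdges))
      (fun g => e ∈ edgeH g) ?_
    rintro g (⟨l, -, ⟨i, -, hl⟩, rfl⟩ | hPsPt)
    · exact absurd rfl (he l (by have := hBn i; omega))
    · exact hPsPt

theorem stmt_9 {V : Type*} (Estar : Set (V × V)) (n : ℕ) (hn : 1 ≤ n) (p : ℕ → V)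
    -- `P` is a path with distinct vertices `p 0, …, p n` (so `|P| = n` edges)
    (hpinj : ∀ l ≤ n, ∀ l' ≤ n, p l = p l' → l = l')
    (hpath : ∀ l, l < n → (p l, p (l + 1)) ∈ Estar)
    (k : ℕ) (s t : Fin k → V) (A B : Fin k → ℕ)
    (hAn : ∀ i, A i ≤ n) (hBn : ∀ i, B i ≤ n) (hABle : ∀ i, A i ≤ B i)
    -- `A i` is the earliest index on `P` reachable from `s i`
    (hAreach : ∀ i, Reach Estar (s i) (p (A i)))
    (hAmin : ∀ i, ∀ l ≤ n, Reach Estar (s i) (p l) → A i ≤ l)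
    -- `B i` is the latest index on `P` that can reach `t i`
    (hBreach : ∀ i, Reach Estar (p (B i)) (t i))
    (hBmax : ∀ i, ∀ l ≤ n, Reach Estar (p l) (t i) → l ≤ B i)
    -- the fixed connecting dipaths, contained in `E*`
    (Ps Pt : Fin k → List V)
    (hPs : ∀ i, IsDipath Estar (Ps i) (s i) (p (A i)))
    (hPt : ∀ i, IsDipath Estar (Pt i) (p (B i)) (t i)) :
    -- the dyadic groups
    let grp : ℕ → ℕ → Finset (Fin k) := fun j ℓ =>
      Finset.univ.filter (fun i => 2 ^ (j - 1) ≤ B i - A i ∧ B i - A i < 2 ^ j ∧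
        A i ≤ ℓ ∧ ℓ ≤ B i)
    let grp0 : ℕ → Finset (Fin k) := fun v =>
      Finset.univ.filter (fun i => A i = B i ∧ A i = v)
    -- vertex set of the junction tree associated with a group `g`
    let vertH : Finset (Fin k) → Set V := fun g =>
      {x | ∃ l, (∃ i ∈ g, A i ≤ l) ∧ (∃ i ∈ g, l ≤ B i) ∧ x = p l} ∪
        {x | ∃ i ∈ g, x ∈ Ps i ∨ x ∈ Pt i}
    -- edge set of the junction tree associated with a group `g`
    let edgeH : Finset (Fin k) → Set (V × V) := fun g =>
      {e | ∃ l, (∃ i ∈ g, A i ≤ l) ∧ (∃ i ∈ g, l + 1 ≤ B i) ∧ e = (p l, p (l + 1))} ∪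
        {e | ∃ i ∈ g, e ∈ listEdges (Ps i) ∨ e ∈ listEdges (Pt i)}
    -- vertices of `V(E*) \ V(P)` lie in at most `10 log₂|P| + 12` junction trees
    (∀ u : V, (∃ e ∈ Estar, u = e.1 ∨ u = e.2) → (∀ l ≤ n, u ≠ p l) →
      (({v | v ≤ n ∧ (grp0 v).Nonempty ∧ u ∈ vertH (grp0 v)}.ncard : ℝ) +
        ∑ j ∈ Finset.Icc 1 (Nat.log 2 n + 1),
          ({ℓ | ℓ ≤ n ∧ 2 ^ (j - 1) ∣ ℓ ∧ (grp j ℓ).Nonempty ∧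
            u ∈ vertH (grp j ℓ)}.ncard : ℝ)) ≤
        10 * Real.logb 2 (n : ℝ) + 12) ∧
    -- edges of `E*` not on `P` lie in at most `10 log₂|P| + 12` junction trees
    (∀ e ∈ Estar, (∀ l, l < n → e ≠ (p l, p (l + 1))) →
      (({v | v ≤ n ∧ (grp0 v).Nonempty ∧ e ∈ edgeH (grp0 v)}.ncard : ℝ) +
        ∑ j ∈ Finset.Icc 1 (Nat.log 2 n + 1),
          ({ℓ | ℓ ≤ n ∧ 2 ^ (j - 1) ∣ ℓ ∧ (grp j ℓ).Nonempty ∧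
            e ∈ edgeH (grp j ℓ)}.ncard : ℝ)) ≤
        10 * Real.logb 2 (n : ℝ) + 12) :=
  stmt_9_general Estar n p k s t A B hAn hBn hAmin hBmax Ps Pt hPs hPt
end
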